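/- arXiv:1607.00370 — 6 statements merged into one kernel-verified Lean document; each statement's English description precedes it below -/
import Mathlib

section
/- Let g be a Lie algebra, h a Lie subalgebra of g, and b ⊆ a ⊆ h subspaces, and suppose g = h ⊕ m as vector spaces with [h, m] ⊆ m. Then the transporter {x ∈ g : [x, a] ⊆ b} equals {x ∈ h : [x, a] ⊆ b} ⊕ (c_g(a) ∩ m), where c_g(a) is the centralizer of a in g. -/
/-- If `g = h ⊕ m` with `h` a Lie subalgebra, `[h,m] ⊆ m`, and
`b ⊆ a ⊆ h` are subspaces, then `c_g(a,b) = c_h(a,b) ⊕ (c_g(a) ∩ m)`. -/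
theorem dsum_centralizer
    (K L : Type*) [Field K] [LieRing L] [LieAlgebra K L]
    (h : LieSubalgebra K L) (m : Submodule K L)
    (hcompl : IsCompl h.toSubmodule m)
    (hhm : ∀ x ∈ h, ∀ y ∈ m, ⁅x, y⁆ ∈ m)
    (a b : Submodule K L) (hba : b ≤ a) (hah : a ≤ h.toSubmodule) :
    {x : L | ∀ y ∈ a, ⁅x, y⁆ ∈ b} =
      {x : L | ∃ u ∈ h, ∃ v ∈ m,
        (∀ y ∈ a, ⁅u, y⁆ ∈ b) ∧ (∀ y ∈ a, ⁅v, y⁆ = 0) ∧ x = u + v} := by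
  ext x
  constructor
  · intro hx
    have hxtop : x ∈ h.toSubmodule ⊔ m := by rw [hcompl.sup_eq_top]; trivial
    obtain ⟨u, hu, v, hv, huv⟩ := Submodule.mem_sup.mp hxtop
    have hzero : ∀ y ∈ a, ⁅v, y⁆ = 0 := by
      intro y hy
      have hyh : y ∈ h := hah hy
      have hvm : ⁅v, y⁆ ∈ m := by
        have := hhm y hyh v hv
        have : -⁅y, v⁆ ∈ m := m.neg_mem this
        rwa [← lie_skew] 
      have hvh : ⁅v, y⁆ ∈ h.toSubmodule := by
        have hxb : ⁅x, y⁆ ∈ b := hx y hy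
        have huh : ⁅u, y⁆ ∈ h.toSubmodule := h.lie_mem hu hyh
        have : ⁅v, y⁆ = ⁅x, y⁆ - ⁅u, y⁆ := by rw [← huv]; rw [add_lie]; abel
        rw [this]
        exact Submodule.sub_mem _ (hah (hba hxb)) huh
      have := hcompl.disjoint
      exact (Submodule.disjoint_def.mp this) _ hvh hvm
    refine ⟨u, hu, v, hv, ?_, hzero, huv.symm⟩
    intro y hy
    have : ⁅u, y⁆ = ⁅x, y⁆ - ⁅v, y⁆ := by rw [← huv, add_lie]; abel
    rw [this, hzero y hy, sub_zero]
    exact hx y hy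
  · rintro ⟨u, hu, v, hv, hub, hv0, rfl⟩
    intro y hy
    rw [add_lie, hv0 y hy, add_zero]
    exact hub y hy
end

section
/- Let n ≤ g be a Lie subalgebra and p a Lie subalgebra with n ⊆ p ⊆ n_g(n) (so n is an ideal of p). Define f^(-1) = n, f^(0) = p, and inductively f^(-j-1) = [n, f^(-j)] and f^(j) = {x ∈ g : [x, n] ⊆ f^(j-1)} for j > 0. Then [f^(i), f^(j)] ⊆ f^(i+j) for all integers i, j. -/
/-- For `n ≤ p ≤ n_g(n)`, the recursively defined family
`f^(-1) = n`, `f^(0) = p`, `f^(-j-1) = [n, f^(-j)]`, `f^(j) = c_g(n, f^(j-1))`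
satisfies `[f^(i), f^(j)] ⊆ f^(i+j)` for all integers `i, j`. -/
theorem filtration_bracket
    (K L : Type*) [Field K] [LieRing L] [LieAlgebra K L]
    (n p : LieSubalgebra K L) (hnp : n ≤ p)
    (hpn : ∀ x ∈ p, ∀ y ∈ n, ⁅x, y⁆ ∈ n)
    (f : ℤ → Submodule K L)
    (hfm1 : f (-1) = n.toSubmodule)
    (hf0 : f 0 = p.toSubmodule)
    (hneg : ∀ j : ℤ, 1 ≤ j →
      f (-j - 1) = Submodule.span K {z : L | ∃ x ∈ n, ∃ y ∈ f (-j), z = ⁅x, y⁆})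
    (hpos : ∀ j : ℤ, 1 ≤ j → ∀ x : L, x ∈ f j ↔ ∀ y ∈ n, ⁅x, y⁆ ∈ f (j - 1)) :
    ∀ i j : ℤ, ∀ x ∈ f i, ∀ y ∈ f j, ⁅x, y⁆ ∈ f (i + j) := by
  have hmem1 : ∀ x : L, x ∈ f (-1) ↔ x ∈ n := fun x => by rw [hfm1]; exact Iff.rfl
  have hmem0 : ∀ x : L, x ∈ f 0 ↔ x ∈ p := fun x => by rw [hf0]; exact Iff.rfl
  -- Lemma A : [n, f j] ⊆ f (j-1)
  have hA : ∀ j : ℤ, ∀ x ∈ n, ∀ y ∈ f j, ⁅x, y⁆ ∈ f (j - 1) := by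
    intro j x hx y hy
    rcases lt_trichotomy j 0 with hj | rfl | hj
    · have h1 : (1:ℤ) ≤ -j := by omega
      have h := hneg (-j) h1
      rw [neg_neg] at h
      rw [h]
      exact Submodule.subset_span ⟨x, hx, y, hy, rfl⟩
    · rw [hmem0] at hy
      rw [show (0:ℤ) - 1 = -1 by ring, hmem1, ← lie_skew]
      exact neg_mem (hpn y hy x hx)
    · rw [← lie_skew]
      exact neg_mem ((hpos j hj y).mp hy x hx)
  have hA' : ∀ j : ℤ, ∀ x ∈ f j, ∀ y ∈ n, ⁅x, y⁆ ∈ f (j - 1) := by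
    intro j x hx y hy
    rw [← lie_skew]
    exact neg_mem (hA j y hy x hx)
  -- negative part: [f (-1-k), f j] ⊆ f (j - 1 - k)
  have hNeg : ∀ k : ℕ, ∀ j : ℤ, ∀ x ∈ f (-1 - (k:ℤ)), ∀ y ∈ f j, ⁅x, y⁆ ∈ f (j - 1 - (k:ℤ)) := by
    intro k
    induction k with
    | zero =>
      intro j x hx y hy
      rw [show (-1 - ((0:ℕ):ℤ)) = -1 by norm_num, hmem1] at hx
      rw [show (j - 1 - ((0:ℕ):ℤ)) = j - 1 by norm_num]
      exact hA j x hx y hy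
    | succ k ih =>
      intro j x hx y hy
      have hspan := hneg ((k:ℤ) + 1) (by omega)
      rw [show (-((k:ℤ)+1) - 1) = -1 - ((k+1:ℕ):ℤ) by push_cast; ring,
        show (-((k:ℤ)+1)) = -1 - ((k:ℕ):ℤ) by push_cast; ring] at hspan
      rw [hspan] at hx
      induction hx using Submodule.span_induction with
      | mem z hz =>
        obtain ⟨a, ha, b, hb, rfl⟩ := hz
        rw [lie_lie]
        refine sub_mem ?_ ?_
        · have h1 : ⁅b, y⁆ ∈ f (j - 1 - (k:ℤ)) := ih j b hb y hy
          have h2 := hA (j - 1 - (k:ℤ)) a ha _ h1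
          rw [show (j - 1 - (k:ℤ) - 1) = j - 1 - ((k+1:ℕ):ℤ) by push_cast; ring] at h2
          exact h2
        · have h1 : ⁅a, y⁆ ∈ f (j - 1) := hA j a ha y hy
          have h2 := ih (j - 1) b hb _ h1
          rw [show (j - 1 - 1 - (k:ℤ)) = j - 1 - ((k+1:ℕ):ℤ) by push_cast; ring] at h2
          exact h2
      | zero => simp
      | add u v hu hv ihu ihv => rw [add_lie]; exact add_mem ihu ihv
      | smul a u hu ihu => rw [smul_lie]; exact Submodule.smul_mem _ _ ihu
  -- negative first argument, arbitrary j, as integers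
  have hNegInt : ∀ i j : ℤ, i < 0 → ∀ x ∈ f i, ∀ y ∈ f j, ⁅x, y⁆ ∈ f (i + j) := by
    intro i j hi x hx y hy
    obtain ⟨k, hk⟩ : ∃ k : ℕ, i = -1 - (k:ℤ) := ⟨(-1 - i).toNat, by omega⟩
    subst hk
    have := hNeg k j x hx y hy
    rw [show (j - 1 - (k:ℤ)) = (-1 - (k:ℤ)) + j by ring] at this
    exact this
  -- main statement for nonnegative first index
  have hMain : ∀ i : ℕ, ∀ j : ℤ, ∀ x ∈ f (i:ℤ), ∀ y ∈ f j, ⁅x, y⁆ ∈ f ((i:ℤ) + j) := by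
    intro i
    induction i with
    | zero =>
      -- first the nonnegative j case by induction
      have hZ : ∀ m : ℕ, ∀ x ∈ f 0, ∀ y ∈ f (m:ℤ), ⁅x, y⁆ ∈ f (m:ℤ) := by
        intro m
        induction m with
        | zero =>
          intro x hx y hy
          simp only [Nat.cast_zero] at hy ⊢
          rw [hmem0] at hx hy ⊢
          exact p.lie_mem hx hy
        | succ m ihm =>
          intro x hx y hy
          rw [hpos ((m+1:ℕ):ℤ) (by push_cast; omega)]
          intro z hz
          rw [show (((m+1:ℕ):ℤ) - 1) = (m:ℤ) by push_cast; ring, lie_lie]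
          refine sub_mem ?_ ?_
          · have h1 : ⁅y, z⁆ ∈ f (m:ℤ) := by
              have := hA' ((m+1:ℕ):ℤ) y hy z hz
              rwa [show (((m+1:ℕ):ℤ) - 1) = (m:ℤ) by push_cast; ring] at this
            exact ihm x hx _ h1
          · have hxz : ⁅x, z⁆ ∈ n := hpn x ((hmem0 x).mp hx) z hz
            have := hA' ((m+1:ℕ):ℤ) y hy _ hxz
            rwa [show (((m+1:ℕ):ℤ) - 1) = (m:ℤ) by push_cast; ring] at this
      intro j x hx y hy
      rcases lt_or_ge j 0 with hj | hj
      · rw [← lie_skew, show ((0:ℕ):ℤ) + j = j + 0 by push_cast; ring]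
        exact neg_mem (hNegInt j 0 hj y hy x hx)
      · obtain ⟨m, rfl⟩ : ∃ m : ℕ, j = (m:ℤ) := ⟨j.toNat, by omega⟩
        rw [show ((0:ℕ):ℤ) + (m:ℤ) = (m:ℤ) by push_cast; ring]
        exact hZ m x hx y hy
    | succ i ihi =>
      -- inner induction on nonnegative j
      have hIn : ∀ m : ℕ, ∀ x ∈ f ((i+1:ℕ):ℤ), ∀ y ∈ f (m:ℤ), ⁅x, y⁆ ∈ f (((i+1:ℕ):ℤ) + (m:ℤ)) := by
        intro m
        induction m with
        | zero =>
          intro x hx y hy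
          rw [hpos (((i+1:ℕ):ℤ) + ((0:ℕ):ℤ)) (by push_cast; omega)]
          intro z hz
          rw [show ((((i+1:ℕ):ℤ) + ((0:ℕ):ℤ)) - 1) = (i:ℤ) by push_cast; ring, lie_lie]
          refine sub_mem ?_ ?_
          · have h1 : ⁅y, z⁆ ∈ f (-1) := by
              have := hA' 0 y (by rwa [show ((0:ℕ):ℤ) = (0:ℤ) by norm_num] at hy) z hz
              rwa [show (0:ℤ) - 1 = -1 by ring] at this
            have h2 := hNegInt (-1) ((i+1:ℕ):ℤ) (by norm_num) _ h1 x hx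
            rw [show (-1 : ℤ) + ((i+1:ℕ):ℤ) = (i:ℤ) by push_cast; ring] at h2
            rw [← lie_skew]
            exact neg_mem h2
          · have hxz : ⁅x, z⁆ ∈ f (i:ℤ) := by
              have := hA' ((i+1:ℕ):ℤ) x hx z hz
              rwa [show (((i+1:ℕ):ℤ) - 1) = (i:ℤ) by push_cast; ring] at this
            rw [← lie_skew]
            refine neg_mem ?_
            have := ihi ((0:ℕ):ℤ) _ hxz y hy
            rwa [show ((i:ℤ) + ((0:ℕ):ℤ)) = (i:ℤ) by push_cast; ring] at this
        | succ m ihm =>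
          intro x hx y hy
          rw [hpos (((i+1:ℕ):ℤ) + ((m+1:ℕ):ℤ)) (by push_cast; omega)]
          intro z hz
          rw [show ((((i+1:ℕ):ℤ) + ((m+1:ℕ):ℤ)) - 1) = (((i+1:ℕ):ℤ) + (m:ℤ)) by push_cast; ring, lie_lie]
          refine sub_mem ?_ ?_
          · have h1 : ⁅y, z⁆ ∈ f (m:ℤ) := by
              have := hA' ((m+1:ℕ):ℤ) y hy z hz
              rwa [show (((m+1:ℕ):ℤ) - 1) = (m:ℤ) by push_cast; ring] at this
            exact ihm x hx _ h1
          · have hxz : ⁅x, z⁆ ∈ f (i:ℤ) := by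
              have := hA' ((i+1:ℕ):ℤ) x hx z hz
              rwa [show (((i+1:ℕ):ℤ) - 1) = (i:ℤ) by push_cast; ring] at this
            rw [← lie_skew]
            refine neg_mem ?_
            have := ihi ((m+1:ℕ):ℤ) _ hxz y hy
            rwa [show ((i:ℤ) + ((m+1:ℕ):ℤ)) = (((i+1:ℕ):ℤ) + (m:ℤ)) by push_cast; ring] at this
      intro j x hx y hy
      rcases lt_or_ge j 0 with hj | hj
      · rw [← lie_skew]
        refine neg_mem ?_
        have := hNegInt j ((i+1:ℕ):ℤ) hj y hy x hx
        rwa [show (j + ((i+1:ℕ):ℤ)) = (((i+1:ℕ):ℤ) + j) by ring] at this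
      · obtain ⟨m, rfl⟩ : ∃ m : ℕ, j = (m:ℤ) := ⟨j.toNat, by omega⟩
        exact hIn m x hx y hy
  intro i j x hx y hy
  rcases lt_or_ge i 0 with hi | hi
  · exact hNegInt i j hi x hx y hy
  · obtain ⟨m, rfl⟩ : ∃ m : ℕ, i = (m:ℤ) := ⟨i.toNat, by omega⟩
    exact hMain m j x hx y hy
end

section
/- Let V be a filtered representation of a filtered Lie algebra g with filtration f^(j). If x ∈ f^(j-1) and y ∈ f^(-j) for some integer j, then trace(ρ(x)ρ(y)) = 0; that is, the trace form of ρ is compatible with the filtration. -/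
/-!
The endomorphism `ρ(x) ∘ ρ(y)` lowers the filtration of `V` by one step. A finite-dimensional
module satisfies both chain conditions, so its exhaustive separated filtration is `⊤` at some
index and `⊥` at another; hence `ρ(x) ∘ ρ(y)` is nilpotent, and its trace vanishes.
-/

theorem Directed.exists_eq_iSup {α ι : Type*} [CompleteLattice α] [WellFoundedGT α] [Nonempty ι]
    {W : ι → α} (hW : Directed (· ≤ ·) W) : ∃ k, W k = ⨆ i, W i := by
  obtain ⟨_, ⟨k, rfl⟩, hk⟩ := wellFounded_gt.has_min (Set.range W) (Set.range_nonempty W)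
  refine ⟨k, le_antisymm (le_iSup W k) (iSup_le fun i => ?_)⟩
  obtain ⟨m, hkm, him⟩ := hW k i
  exact him.trans (not_lt_iff_le_imp_ge.mp (hk _ ⟨m, rfl⟩) hkm)

theorem Directed.exists_eq_iInf {α ι : Type*} [CompleteLattice α] [WellFoundedLT α] [Nonempty ι]
    {W : ι → α} (hW : Directed (· ≥ ·) W) : ∃ k, W k = ⨅ i, W i :=
  Directed.exists_eq_iSup (α := αᵒᵈ) hW

namespace Module.End

variable {R V : Type*} [Ring R] [AddCommGroup V] [Module R V] {W : ℤ → Submodule R V}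
  {φ : Module.End R V}

theorem pow_apply_mem_of_apply_mem_pred (hφ : ∀ k, ∀ v ∈ W k, φ v ∈ W (k - 1)) (n : ℕ) :
    ∀ k, ∀ v ∈ W k, (φ ^ n) v ∈ W (k - n) := by
  induction n with
  | zero => intro k v hv; simpa using hv
  | succ n ih =>
    intro k v hv
    rw [pow_succ', Module.End.mul_apply, Nat.cast_succ, ← sub_sub]
    exact hφ _ _ (ih k v hv)

theorem isNilpotent_of_apply_mem_pred [IsNoetherian R V] [IsArtinian R V] (hW : Monotone W)
    (hexh : ⨆ k, W k = ⊤) (hsep : ⨅ k, W k = ⊥) (hφ : ∀ k, ∀ v ∈ W k, φ v ∈ W (k - 1)) :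
    IsNilpotent φ := by
  obtain ⟨a, ha⟩ := hW.directed_le.exists_eq_iSup
  obtain ⟨b, hb⟩ := hW.directed_ge.exists_eq_iInf
  refine ⟨(a - b).toNat, LinearMap.ext fun v => ?_⟩
  have hv : (φ ^ (a - b).toNat) v ∈ W (a - (a - b).toNat) :=
    pow_apply_mem_of_apply_mem_pred hφ _ a v (by simp [ha, hexh])
  have hvb : (φ ^ (a - b).toNat) v ∈ W b := hW (by omega) hv
  simpa [hb, hsep] using hvb

end Module.End

theorem traceForm_compatible_with_filtration_general
    (K L V : Type*) [Field K] [LieRing L] [LieAlgebra K L]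
    [AddCommGroup V] [Module K V] [LieRingModule L V] [LieModule K L V]
    [FiniteDimensional K V]
    (f : ℤ → Submodule K L) (W : ℤ → Submodule K V)
    (hWmono : Monotone W)
    (hWexh : ⨆ k, W k = ⊤) (hWsep : ⨅ k, W k = ⊥)
    (hact : ∀ i j : ℤ, ∀ x ∈ f i, ∀ v ∈ W j, ⁅x, v⁆ ∈ W (i + j)) :
    ∀ j : ℤ, ∀ x ∈ f (j - 1), ∀ y ∈ f (-j),
      LinearMap.trace K V (LieModule.toEnd K L V x ∘ₗ LieModule.toEnd K L V y) = 0 := by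
  intro j x hx y hy
  have hstep : ∀ k, ∀ v ∈ W k,
      (LieModule.toEnd K L V x ∘ₗ LieModule.toEnd K L V y) v ∈ W (k - 1) := by
    intro k v hv
    have hxyv := hact _ _ x hx _ (hact _ _ y hy v hv)
    rwa [show j - 1 + (-j + k) = k - 1 by ring] at hxyv
  exact (LinearMap.isNilpotent_trace_of_isNilpotent
    (Module.End.isNilpotent_of_apply_mem_pred hWmono hWexh hWsep hstep)).eq_zero

/-- For a filtered representation `V` of a filtered Lie algebra `g`,
the trace form is compatible with the filtration:
`x ∈ f^(j-1)`, `y ∈ f^(-j)` implies `trace(ρ(x)ρ(y)) = 0`. -/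
theorem traceForm_compatible_with_filtration
    (K L V : Type*) [Field K] [LieRing L] [LieAlgebra K L]
    [AddCommGroup V] [Module K V] [LieRingModule L V] [LieModule K L V]
    [FiniteDimensional K V]
    (f : ℤ → Submodule K L) (W : ℤ → Submodule K V)
    (hfmono : Monotone f)
    (hfbr : ∀ i j : ℤ, ∀ x ∈ f i, ∀ y ∈ f j, ⁅x, y⁆ ∈ f (i + j))
    (hfexh : ⨆ k, f k = ⊤) (hfsep : ⨅ k, f k = ⊥)
    (hWmono : Monotone W)
    (hWexh : ⨆ k, W k = ⊤) (hWsep : ⨅ k, W k = ⊥)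
    (hact : ∀ i j : ℤ, ∀ x ∈ f i, ∀ v ∈ W j, ⁅x, v⁆ ∈ W (i + j)) :
    ∀ j : ℤ, ∀ x ∈ f (j - 1), ∀ y ∈ f (-j),
      LinearMap.trace K V (LieModule.toEnd K L V x ∘ₗ LieModule.toEnd K L V y) = 0 :=
  traceForm_compatible_with_filtration_general K L V f W hWmono hWexh hWsep hact
end

section
/- Let ρ : g → gl(V) be a finite-dimensional representation of a Lie algebra g, and let h ≤ g be a Lie subalgebra such that ρ(h) is a nilpotent subalgebra acting by nilpotent endomorphisms. Then h is contained in the orthogonal complement of its normalizer n_g(h) with respect to the trace form of ρ. -/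
attribute [local instance 100] LieRing.ofAssociativeRing

/-!
By Engel's theorem `V` is a nilpotent `h`-module, so its lower central series
`V = V₀ ⊇ V₁ ⊇ ⋯ ⊇ V_k = 0` as an `h`-module terminates. Elements of `h` map `Vᵢ` into `Vᵢ₊₁`,
and by the Leibniz rule elements of the normalizer of `h` preserve every `Vᵢ`. Hence for `x ∈ h`
and `y ∈ n(h)` the endomorphism `ρ(x) ρ(y)` lowers the filtration, so it is nilpotent and has
trace zero.
-/

lemma Module.End.isNilpotent_of_mapsTo_succ {R M : Type*} [Semiring R] [AddCommMonoid M]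
    [Module R M] {f : Module.End R M} {p : ℕ → Submodule R M} {k : ℕ}
    (h0 : p 0 = ⊤) (hk : p k = ⊥) (hf : ∀ i, Set.MapsTo f (p i) (p (i + 1))) :
    IsNilpotent f := by
  have hpow : ∀ n v, (f ^ n) v ∈ p n := by
    intro n
    induction n with
    | zero => simp [h0]
    | succ n ih => exact fun v ↦ by rw [pow_succ', Module.End.mul_apply]; exact hf n (ih v)
  exact ⟨k, LinearMap.ext fun v ↦ by simpa [hk] using hpow k v⟩

namespace LieSubalgebra

variable {K L V : Type*} [CommRing K] [LieRing L] [LieAlgebra K L]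
  [AddCommGroup V] [Module K V] [LieRingModule L V]
  (h : LieSubalgebra K L)

lemma lie_mem_lowerCentralSeries_succ {x : L} (hx : x ∈ h) {k : ℕ} {v : V}
    (hv : v ∈ LieModule.lowerCentralSeries K h V k) :
    ⁅x, v⁆ ∈ LieModule.lowerCentralSeries K h V (k + 1) := by
  rw [LieModule.lowerCentralSeries_succ]
  exact LieSubmodule.lie_mem_lie (x := (⟨x, hx⟩ : h)) (LieSubmodule.mem_top _) hv

lemma lie_mem_lowerCentralSeries_of_mem_normalizer [LieModule K L V] {y : L}
    (hy : y ∈ h.normalizer) (k : ℕ) {v : V} (hv : v ∈ LieModule.lowerCentralSeries K h V k) :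
    ⁅y, v⁆ ∈ LieModule.lowerCentralSeries K h V k := by
  induction k generalizing v with
  | zero => exact LieSubmodule.mem_top _
  | succ k ih =>
    rw [LieModule.lowerCentralSeries_succ, ← LieSubmodule.mem_toSubmodule,
      LieSubmodule.lieIdeal_oper_eq_linear_span'] at hv
    refine (Submodule.span_le (p := (LieModule.lowerCentralSeries K h V (k + 1)).toSubmodule
      |>.comap (LieModule.toEnd K L V y))).mpr ?_ hv
    rintro _ ⟨z, -, n, hn, rfl⟩
    have hyz : ⁅y, (z : L)⁆ ∈ h := (h.mem_normalizer_iff y).mp hy _ z.2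
    show ⁅y, ⁅(z : L), n⁆⁆ ∈ LieModule.lowerCentralSeries K h V (k + 1)
    rw [leibniz_lie]
    exact add_mem (h.lie_mem_lowerCentralSeries_succ hyz hn)
      (h.lie_mem_lowerCentralSeries_succ z.2 (ih hn))

end LieSubalgebra

theorem subalgebra_perp_normalizer_general
    (K L V : Type*) [Field K] [LieRing L] [LieAlgebra K L]
    [AddCommGroup V] [Module K V] [LieRingModule L V] [LieModule K L V]
    [FiniteDimensional K V]
    (h : LieSubalgebra K L)
    (hnilpEl : ∀ x ∈ h, IsNilpotent (LieModule.toEnd K L V x)) :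
    ∀ x ∈ h, ∀ y ∈ h.normalizer,
      LinearMap.trace K V (LieModule.toEnd K L V x ∘ₗ LieModule.toEnd K L V y) = 0 := by
  intro x hx y hy
  have : LieModule.IsNilpotent h V :=
    LieModule.isNilpotent_iff_forall'.mpr fun z ↦ hnilpEl z z.2
  obtain ⟨k, hk⟩ := LieModule.IsNilpotent.nilpotent K h V
  have hxy : IsNilpotent (LieModule.toEnd K L V x ∘ₗ LieModule.toEnd K L V y) :=
    Module.End.isNilpotent_of_mapsTo_succ
      (p := fun i ↦ (LieModule.lowerCentralSeries K h V i).toSubmodule) (k := k)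
      rfl (by simp [hk])
      fun i _ hv ↦ h.lie_mem_lowerCentralSeries_succ hx
        (h.lie_mem_lowerCentralSeries_of_mem_normalizer hy i hv)
  exact (LinearMap.isNilpotent_trace_of_isNilpotent hxy).eq_zero

/-- If `h ≤ g` is a subalgebra such that `ρ(h)` is a nilpotent subalgebra
acting by nilpotent endomorphisms on `V`, then `h` is orthogonal to its normalizer
`n_g(h)` with respect to the trace form of `ρ`. -/
theorem subalgebra_perp_normalizer
    (K L V : Type*) [Field K] [CharZero K] [LieRing L] [LieAlgebra K L]
    [FiniteDimensional K L]
    [AddCommGroup V] [Module K V] [LieRingModule L V] [LieModule K L V]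
    [FiniteDimensional K V]
    (h : LieSubalgebra K L)
    (hnilpEl : ∀ x ∈ h, IsNilpotent (LieModule.toEnd K L V x))
    (hnilpAlg : LieRing.IsNilpotent (h.map (LieModule.toEnd K L V : L →ₗ⁅K⁆ Module.End K V))) :
    ∀ x ∈ h, ∀ y ∈ h.normalizer,
      LinearMap.trace K V (LieModule.toEnd K L V x ∘ₗ LieModule.toEnd K L V y) = 0 :=
  subalgebra_perp_normalizer_general K L V h hnilpEl
end

section
/- Let g be a finite-dimensional Lie algebra over a field of characteristic zero. Then x lies in the nilpotent cone of g (i.e., ρ(x) is nilpotent in every finite-dimensional representation ρ) if and only if x ∈ [g, g] and ad(x) is nilpotent. -/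
/-- A finite-dimensional representation of a Lie algebra `L` over `K`. -/
structure FinDimRep (K L : Type) [Field K] [LieRing L] [LieAlgebra K L] : Type 1 where
  carrier : Type
  [isAddCommGroup : AddCommGroup carrier]
  [isModule : Module K carrier]
  [isLieRingModule : LieRingModule L carrier]
  [isLieModule : LieModule K L carrier]
  [isFinite : FiniteDimensional K carrier]

attribute [instance] FinDimRep.isAddCommGroup FinDimRep.isModule FinDimRep.isLieRingModule
  FinDimRep.isLieModule FinDimRep.isFinite

/-! The linear forms vanishing on `⁅L, L⁆` are exactly the characters of `L`, and `x` acts on the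
line defined by a character `χ` by the scalar `χ x`; so if `x ∉ ⁅L, L⁆`, some one-dimensional
representation sees `x` act invertibly, while the adjoint representation forces `ad x` nilpotent.
Conversely, after extending scalars to an algebraic closure, the nilpotency of `ad x` makes each
generalized eigenspace of `x` on a representation a Lie submodule. Since `x ∈ ⁅L, L⁆`, the trace of
`x` there, `dim · μ`, vanishes, so in characteristic zero every eigenvalue of `x` is `0`. -/

open LieAlgebra Module TensorProduct

lemma Module.End.isNilpotent_baseChange_iff {R A M : Type*} [CommRing R] [CommRing A]
    [Algebra R A] [FaithfulSMul R A] [AddCommGroup M] [Module R M] [Module.Flat R M]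
    {f : Module.End R M} : IsNilpotent (f.baseChange A) ↔ IsNilpotent f :=
  IsNilpotent.map_iff (f := Module.End.baseChangeHom R A M)
    (LinearMap.baseChangeHom_injective R M A)

lemma Module.End.mem_maxGenEigenspace_zero_of_isNilpotent {R M : Type*} [CommRing R]
    [AddCommGroup M] [Module R M] {f : Module.End R M} (hf : IsNilpotent f) (m : M) :
    m ∈ f.maxGenEigenspace 0 := by
  obtain ⟨k, hk⟩ := hf
  exact (f.mem_maxGenEigenspace 0 m).mpr ⟨k, by simp [hk]⟩

lemma Module.End.isNilpotent_of_maxGenEigenspace_zero_eq_top {R M : Type*} [CommRing R]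
    [AddCommGroup M] [Module R M] [IsNoetherian R M] {f : Module.End R M}
    (hf : f.maxGenEigenspace 0 = ⊤) : IsNilpotent f := by
  refine ⟨f.maxGenEigenspaceIndex 0, LinearMap.ker_eq_top.mp ?_⟩
  rw [← hf, f.maxGenEigenspace_eq, Module.End.genEigenspace_nat, zero_smul, sub_zero]

namespace LieModule

variable {R L M : Type*} [CommRing R] [LieRing L] [LieAlgebra R L]
  [AddCommGroup M] [Module R M] [LieRingModule L M] [LieModule R L M]

variable (M) in
/-- Every `y : L` is a generalized `0`-eigenvector of `ad x`, so `⁅y, -⁆` shifts generalized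
eigenvalues of `x` by `0`. -/
def maxGenEigenspaceOfIsNilpotentAd {x : L} (hx : _root_.IsNilpotent (LieAlgebra.ad R L x))
    (μ : R) : LieSubmodule R L M where
  __ := (toEnd R L M x).maxGenEigenspace μ
  lie_mem {y _} hm := by
    simpa using lie_mem_maxGenEigenspace_toEnd
      (Module.End.mem_maxGenEigenspace_zero_of_isNilpotent hx y) hm

variable {K : Type*} [Field K] [LieAlgebra K L] [Module K M] [LieModule K L M]
  [FiniteDimensional K M]

lemma trace_toEnd_maxGenEigenspaceOfIsNilpotentAd {x : L}
    (hx : _root_.IsNilpotent (LieAlgebra.ad K L x)) (μ : K) :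
    LinearMap.trace K _ (toEnd K L (maxGenEigenspaceOfIsNilpotentAd M hx μ) x) =
      finrank K (maxGenEigenspaceOfIsNilpotentAd M hx μ) • μ := by
  set N := maxGenEigenspaceOfIsNilpotentAd M hx μ
  have hnil : _root_.IsNilpotent (toEnd K L N x - algebraMap K _ μ) :=
    (toEnd K L M x).isNilpotent_restrict_maxGenEigenspace_sub_algebraMap μ
  have := (LinearMap.isNilpotent_trace_of_isNilpotent hnil).eq_zero
  rwa [map_sub, Module.algebraMap_end_eq_smul_id, map_smul, LinearMap.trace_id, sub_eq_zero,
    smul_eq_mul, mul_comm, ← nsmul_eq_mul] at this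

lemma eq_zero_of_maxGenEigenspace_toEnd_ne_bot [CharZero K] {x : L}
    (hx : x ∈ derivedSeries K L 1) (had : _root_.IsNilpotent (LieAlgebra.ad K L x)) {μ : K}
    (hμ : (toEnd K L M x).maxGenEigenspace μ ≠ ⊥) : μ = 0 := by
  set N := maxGenEigenspaceOfIsNilpotentAd M had μ
  have htrace : LinearMap.trace K _ (toEnd K L N x) = 0 :=
    trace_toEnd_eq_zero_of_mem_lcs K L N le_rfl
      (derivedSeries_le_lowerCentralSeries K L 1 hx)
  have : Nontrivial N := Submodule.nontrivial_iff_ne_bot.mpr hμ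
  rw [trace_toEnd_maxGenEigenspaceOfIsNilpotentAd, nsmul_eq_mul] at htrace
  exact (mul_eq_zero.mp htrace).resolve_left (by exact_mod_cast finrank_pos.ne')

lemma isNilpotent_toEnd_of_isAlgClosed [CharZero K] [IsAlgClosed K] {x : L}
    (hx : x ∈ derivedSeries K L 1) (had : _root_.IsNilpotent (LieAlgebra.ad K L x)) :
    _root_.IsNilpotent (toEnd K L M x) := by
  have htop : (toEnd K L M x).maxGenEigenspace 0 = ⊤ := by
    rw [eq_top_iff, ← Module.End.iSup_maxGenEigenspace_eq_top (toEnd K L M x)]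
    refine iSup_le fun μ ↦ ?_
    by_cases hμ : (toEnd K L M x).maxGenEigenspace μ = ⊥
    · simp [hμ]
    · rw [eq_zero_of_maxGenEigenspace_toEnd_ne_bot hx had hμ]
  exact Module.End.isNilpotent_of_maxGenEigenspace_zero_eq_top htop

lemma isNilpotent_toEnd_of_mem_derivedSeries [CharZero K] {x : L}
    (hx : x ∈ derivedSeries K L 1) (had : _root_.IsNilpotent (LieAlgebra.ad K L x)) :
    _root_.IsNilpotent (toEnd K L M x) := by
  let A := AlgebraicClosure K
  have hxA : (1 : A) ⊗ₜ[K] x ∈ derivedSeries A (A ⊗[K] L) 1 := by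
    rw [derivedSeries_baseChange]
    exact Submodule.tmul_mem_baseChange_of_mem 1 hx
  have hadA : _root_.IsNilpotent (LieAlgebra.ad A (A ⊗[K] L) ((1 : A) ⊗ₜ[K] x)) := by
    rwa [ad, toEnd_baseChange, Module.End.isNilpotent_baseChange_iff]
  rw [← Module.End.isNilpotent_baseChange_iff (A := A), ← toEnd_baseChange]
  exact isNilpotent_toEnd_of_isAlgClosed hxA hadA

end LieModule

section LieCharacter

attribute [local instance] LieRing.ofAssociativeRing

lemma LieAlgebra.mem_derivedSeries_one_of_forall_lieCharacter_eq_zero {K L : Type*} [Field K]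
    [LieRing L] [LieAlgebra K L] {x : L}
    (h : ∀ χ : LieCharacter K L, χ x = 0) : x ∈ derivedSeries K L 1 := by
  by_contra hx
  obtain ⟨f, hfx, hf⟩ := Submodule.exists_le_ker_of_notMem hx
  let χ : LieCharacter K L :=
    { f with
      map_lie' := fun {u v} ↦ by
        rw [LinearMap.toFun_eq_coe, LieRing.of_associative_ring_bracket, mul_comm, sub_self]
        exact hf (LieSubmodule.lie_mem_lie (LieSubmodule.mem_top u) (LieSubmodule.mem_top v)) }
  exact hfx (h χ)

variable {K L : Type} [Field K] [LieRing L] [LieAlgebra K L]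

def FinDimRep.ofLieCharacter (χ : LieCharacter K L) : FinDimRep K L :=
  letI := LieRingModule.compLieHom K ((Algebra.ofId K (Module.End K K)).toLieHom.comp χ)
  letI := LieModule.compLieHom (R := K) K ((Algebra.ofId K (Module.End K K)).toLieHom.comp χ)
  ⟨K⟩

lemma FinDimRep.isNilpotent_toEnd_ofLieCharacter_iff (χ : LieCharacter K L) (y : L) :
    IsNilpotent (LieModule.toEnd K L (ofLieCharacter χ).carrier y) ↔ χ y = 0 := by
  change IsNilpotent (algebraMap K (Module.End K K) (χ y)) ↔ _
  rw [IsNilpotent.map_iff (algebraMap K _).injective, isNilpotent_iff_eq_zero]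

end LieCharacter

/-- `x` lies in the nilpotent cone of `g` (acts nilpotently in every
finite-dimensional representation) iff `x ∈ [g,g]` and `ad(x)` is nilpotent. -/
theorem mem_nilpotentCone_iff
    (K L : Type) [Field K] [CharZero K] [LieRing L] [LieAlgebra K L]
    [FiniteDimensional K L] (x : L) :
    (∀ R : FinDimRep K L, IsNilpotent (LieModule.toEnd K L R.carrier x)) ↔
      (x ∈ ⁅(⊤ : LieIdeal K L), (⊤ : LieIdeal K L)⁆ ∧
        IsNilpotent (LieAlgebra.ad K L x)) := by
  refine ⟨fun h ↦ ⟨?_, h ⟨L⟩⟩, fun ⟨hx, had⟩ _ ↦ ?_⟩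
  · exact LieAlgebra.mem_derivedSeries_one_of_forall_lieCharacter_eq_zero fun χ ↦
      (FinDimRep.isNilpotent_toEnd_ofLieCharacter_iff χ x).mp (h _)
  · exact LieModule.isNilpotent_toEnd_of_mem_derivedSeries hx had
end

section
/- Let g be a finite-dimensional reductive Lie algebra over a field of characteristic zero, let k ≤ g be a subalgebra all of whose elements are ad-semisimple, and suppose ξ ∈ k satisfies: ad(ξ) is semisimple with integer eigenvalues and k is ad(ξ)-invariant. Then ξ is central in k; i.e., [ξ, x] = 0 for all x ∈ k. -/
/-- A Lie algebra is reductive if it has a faithful semisimple (completely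
reducible) finite-dimensional representation. -/
def IsReductive (K L : Type) [Field K] [LieRing L] [LieAlgebra K L] : Prop :=
  ∃ R : FinDimRep K L,
    Function.Injective (LieModule.toEnd K L R.carrier) ∧
      ComplementedLattice (LieSubmodule K L R.carrier)

/-- Auxiliary lemma: an element of an anisotropic subalgebra which is an
eigenvector of `ad ξ` (for `ξ ∈ k`) with nonzero eigenvalue must vanish. -/
lemma eigvec_eq_zero_aux
    (K L : Type) [Field K] [LieRing L] [LieAlgebra K L]
    [FiniteDimensional K L]
    (k : LieSubalgebra K L)
    (hk : ∀ x ∈ k, (LieAlgebra.ad K L x).IsSemisimple)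
    (ξ : L) (μ : K) (y : L) (hy : y ∈ k)
    (hfy : ⁅ξ, y⁆ = μ • y) (hμ : μ ≠ 0) : y = 0 := by
  set g := LieAlgebra.ad K L y with hg
  have hs := (hk y hy).isFinitelySemisimple
  have hgξ : g ξ = -(μ • y) := by
    rw [hg, LieAlgebra.ad_apply, ← lie_skew, hfy]
  have hg2 : g (g ξ) = 0 := by
    rw [hgξ, hg, LieAlgebra.ad_apply]
    simp
  have hξmem : ξ ∈ g.genEigenspace 0 2 := by
    rw [Module.End.mem_genEigenspace]
    refine ⟨2, le_refl _, ?_⟩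
    simpa [pow_two] using hg2
  rw [hs.genEigenspace_eq_eigenspace 0 (by norm_num)] at hξmem
  rw [Module.End.mem_eigenspace_iff] at hξmem
  rw [hξmem, zero_smul] at hgξ
  have hμy : μ • y = 0 := by rw [← neg_eq_zero, ← hgξ]
  rcases smul_eq_zero.mp hμy with h | h
  · exact absurd h hμ
  · exact h

/-- if `k` is an anisotropic (ad-semisimple) subalgebra of a
finite-dimensional reductive Lie algebra containing an element `ξ` such that
`ad(ξ)` is diagonalizable with integer eigenvalues, then `ξ` is central in `k`. -/
theorem grading_element_central_in_anisotropic
    (K L : Type) [Field K] [CharZero K] [LieRing L] [LieAlgebra K L]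
    [FiniteDimensional K L]
    (hred : IsReductive K L)
    (k : LieSubalgebra K L)
    (hk : ∀ x ∈ k, (LieAlgebra.ad K L x).IsSemisimple)
    (ξ : L) (hξ : ξ ∈ k)
    (hdiag : ⨆ n : ℤ, Module.End.eigenspace (LieAlgebra.ad K L ξ) (n : K) = ⊤) :
    ∀ x ∈ k, ⁅ξ, x⁆ = 0 := by
  classical
  intro x hx
  set f := LieAlgebra.ad K L ξ with hf
  have hmap : ∀ z ∈ k.toSubmodule, f z ∈ k.toSubmodule := by
    intro z hz
    have : ⁅ξ, z⁆ ∈ k := k.lie_mem hξ hz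
    simpa [hf, LieAlgebra.ad_apply] using this
  have htop : ⨆ μ : K, f.genEigenspace μ 1 = ⊤ := by
    rw [eq_top_iff, ← hdiag]
    exact iSup_le fun n => le_iSup (fun μ : K => f.genEigenspace μ 1) (n : K)
  have hsplit := Submodule.inf_iSup_genEigenspace (p := k.toSubmodule) (f := f) hmap 1
  rw [htop, inf_top_eq] at hsplit
  have hxmem : x ∈ ⨆ μ : K, k.toSubmodule ⊓ f.genEigenspace μ 1 := by
    rw [← hsplit]; exact hx
  obtain ⟨c, hc, hsum⟩ := (Submodule.mem_iSup_iff_exists_finsupp _ _).mp hxmem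
  have hzero : f x = 0 := by
    rw [← hsum, map_finsuppSum]
    rw [Finsupp.sum]
    refine Finset.sum_eq_zero fun μ _ => ?_
    have h1 := Submodule.mem_inf.mp (hc μ)
    have hker : f (c μ) = μ • c μ := Module.End.mem_eigenspace_iff.mp h1.2
    by_cases hμ0 : μ = 0
    · rw [hker, hμ0, zero_smul]
    · have hcy : ⁅ξ, c μ⁆ = μ • c μ := by
        simpa [hf, LieAlgebra.ad_apply] using hker
      have := eigvec_eq_zero_aux K L k hk ξ μ (c μ) h1.1 hcy hμ0
      rw [this, map_zero]
  simpa [hf, LieAlgebra.ad_apply] using hzero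
end
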